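/- Let T be a bounded self-adjoint positive operator on a complex Hilbert space, let λ > 0, and let r ∈ (0, 1]. Let T^r denote the r-th power of T defined by the continuous functional calculus. Then ‖λ (T + λI)⁻¹ T^r‖ ≤ λ^r; equivalently, ‖(I − T(T + λI)⁻¹) T^r‖ ≤ λ^r. -/

import Mathlib

/-!
By the continuous functional calculus, `λ (T + λ)⁻¹ T^r = f(T)` with `f(x) = λ x^r / (x + λ)`,
so its norm is at most the supremum of `f` on the spectrum of `T`, which lies in `[0, ∞)`.
There weighted AM–GM gives `λ^(1-r) x^r ≤ (1 - r) λ + r x ≤ x + λ`, i.e. `f(x) ≤ λ^r`.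
The second operator is the first one, since `I - T (T + λ)⁻¹ = λ (T + λ)⁻¹`.
-/

open scoped ComplexOrder

namespace Real

theorem mul_rpow_le_rpow_mul_add {x lam r : ℝ} (hx : 0 ≤ x) (hlam : 0 ≤ lam) (hr₀ : 0 ≤ r)
    (hr₁ : r ≤ 1) : lam * x ^ r ≤ lam ^ r * (x + lam) := by
  have amgm : lam ^ (1 - r) * x ^ r ≤ (1 - r) * lam + r * x :=
    geom_mean_le_arith_mean2_weighted (by linarith) hr₀ hlam hx (by ring)
  have hsplit : lam = lam ^ r * lam ^ (1 - r) := by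
    rw [← rpow_add' hlam (by norm_num), add_sub_cancel, rpow_one]
  calc lam * x ^ r = lam ^ r * (lam ^ (1 - r) * x ^ r) := by rw [← mul_assoc, ← hsplit]
    _ ≤ lam ^ r * ((1 - r) * lam + r * x) := by gcongr
    _ ≤ lam ^ r * (x + lam) := by gcongr lam ^ r * ?_; nlinarith

end Real

theorem one_sub_mul_inverse_add_smul_one {R A : Type*} [Semiring R] [Ring A] [Module R A]
    [IsScalarTower R A A] {a : A} {c : R} (h : IsUnit (a + c • 1)) :
    1 - a * Ring.inverse (a + c • 1) = c • Ring.inverse (a + c • 1) := by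
  have := Ring.mul_inverse_cancel _ h
  rw [add_mul, smul_mul_assoc, one_mul] at this
  exact sub_eq_of_eq_add' this.symm

theorem ContinuousLinearMap.isPositive_of_inner_nonneg {E : Type*} [NormedAddCommGroup E]
    [InnerProductSpace ℂ E] {T : E →L[ℂ] E} (h : ∀ x, 0 ≤ inner ℂ (T x) x) : T.IsPositive := by
  refine (isPositive_iff_complex T).mpr fun x => ?_
  obtain ⟨hre, him⟩ := Complex.nonneg_iff.mp (h x)
  exact ⟨Complex.ext (by simp) (by simpa using him), hre⟩

section CStarAlgebra

variable {A : Type*} [CStarAlgebra A]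

theorem IsSelfAdjoint.add_smul_one_eq_cfc {a : A} (ha : IsSelfAdjoint a) (lam : ℝ) :
    a + (lam : ℂ) • (1 : A) = cfc (fun x : ℝ => x + lam) a := by
  rw [cfc_add_const lam (fun x : ℝ => x) a, cfc_id' ℝ a, Algebra.algebraMap_eq_smul_one,
    Complex.coe_smul]

variable [PartialOrder A] [StarOrderedRing A] {a : A} {lam : ℝ}

theorem isUnit_add_smul_one_of_nonneg (ha : 0 ≤ a) (hlam : 0 < lam) :
    IsUnit (a + (lam : ℂ) • (1 : A)) := by
  rw [ha.isSelfAdjoint.add_smul_one_eq_cfc, isUnit_cfc_iff _ a]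
  exact fun x hx => by linarith [spectrum_nonneg_of_nonneg ha hx]

theorem ring_inverse_add_smul_one_eq_cfc (ha : 0 ≤ a) (hlam : 0 < lam) :
    Ring.inverse (a + (lam : ℂ) • (1 : A)) = cfc (fun x : ℝ => (x + lam)⁻¹) a := by
  rw [ha.isSelfAdjoint.add_smul_one_eq_cfc, ← cfc_inv (fun x : ℝ => x + lam) a]
  exact fun x hx => by linarith [spectrum_nonneg_of_nonneg ha hx]

theorem norm_smul_ring_inverse_add_smul_one_mul_rpow_le (ha : 0 ≤ a) (hlam : 0 < lam) {r : ℝ}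
    (hr₀ : 0 ≤ r) (hr₁ : r ≤ 1) :
    ‖(lam : ℂ) • (Ring.inverse (a + (lam : ℂ) • (1 : A)) * cfc (fun x : ℝ => x ^ r) a)‖ ≤
      lam ^ r := by
  have hσ : ∀ x ∈ spectrum ℝ a, 0 ≤ x := fun x hx => spectrum_nonneg_of_nonneg ha hx
  have hpow : ContinuousOn (fun x : ℝ => x ^ r) (spectrum ℝ a) :=
    (Real.continuous_rpow_const hr₀).continuousOn
  have hinv : ContinuousOn (fun x : ℝ => (x + lam)⁻¹) (spectrum ℝ a) :=
    (continuousOn_id.add continuousOn_const).inv₀ fun x hx => by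
      simp only [Pi.add_apply, id]; linarith [hσ x hx]
  rw [ring_inverse_add_smul_one_eq_cfc ha hlam, ← cfc_mul _ _ a, Complex.coe_smul,
    ← cfc_smul lam _ a]
  refine norm_cfc_le (by positivity) fun x hx => ?_
  have hx₀ := hσ x hx
  have hxlam : 0 < x + lam := by linarith
  rw [smul_eq_mul, ← mul_assoc, mul_comm _ (_⁻¹), mul_assoc, norm_mul, norm_inv,
    Real.norm_of_nonneg hxlam.le, Real.norm_of_nonneg (by positivity), inv_mul_le_iff₀ hxlam,
    mul_comm (x + lam)]
  exact Real.mul_rpow_le_rpow_mul_add hx₀ hlam.le hr₀ hr₁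

end CStarAlgebra

theorem stmt5_general {H : Type*} [NormedAddCommGroup H] [InnerProductSpace ℂ H] [CompleteSpace H]
    (T : H →L[ℂ] H)
    (hpos : ∀ f : H, 0 ≤ (inner ℂ (T f) f : ℂ))
    (lam r : ℝ) (hlam : 0 < lam) (hr : 0 < r) (hr1 : r ≤ 1) :
    ‖(lam : ℂ) • ((Ring.inverse (T + (lam : ℂ) • (1 : H →L[ℂ] H))).comp
        (cfc (fun x : ℝ => x ^ r) T))‖ ≤ lam ^ r ∧
    ‖((1 : H →L[ℂ] H) - T.comp (Ring.inverse (T + (lam : ℂ) • (1 : H →L[ℂ] H)))).comp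
        (cfc (fun x : ℝ => x ^ r) T)‖ ≤ lam ^ r := by
  have hT : 0 ≤ T :=
    (ContinuousLinearMap.nonneg_iff_isPositive T).mpr
      (ContinuousLinearMap.isPositive_of_inner_nonneg hpos)
  have hbound := norm_smul_ring_inverse_add_smul_one_mul_rpow_le hT hlam hr.le hr1
  refine ⟨hbound, ?_⟩
  rwa [← ContinuousLinearMap.mul_def, ← ContinuousLinearMap.mul_def,
    one_sub_mul_inverse_add_smul_one (isUnit_add_smul_one_of_nonneg hT hlam), smul_mul_assoc]

/-- Bias bound under a source condition: for a bounded positive self-adjoint operator `T`,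
`λ > 0` and `r ∈ (0,1]`, with `T^r` given by the continuous functional calculus,
one has `‖λ(T + λI)⁻¹ T^r‖ ≤ λ^r`, equivalently `‖(I − T(T + λI)⁻¹) T^r‖ ≤ λ^r`. -/
theorem stmt5 {H : Type*} [NormedAddCommGroup H] [InnerProductSpace ℂ H] [CompleteSpace H]
    (T : H →L[ℂ] H) (hT : IsSelfAdjoint T)
    (hpos : ∀ f : H, 0 ≤ (inner ℂ (T f) f : ℂ))
    (lam r : ℝ) (hlam : 0 < lam) (hr : 0 < r) (hr1 : r ≤ 1) :
    ‖(lam : ℂ) • ((Ring.inverse (T + (lam : ℂ) • (1 : H →L[ℂ] H))).comp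
        (cfc (fun x : ℝ => x ^ r) T))‖ ≤ lam ^ r ∧
    ‖((1 : H →L[ℂ] H) - T.comp (Ring.inverse (T + (lam : ℂ) • (1 : H →L[ℂ] H)))).comp
        (cfc (fun x : ℝ => x ^ r) T)‖ ≤ lam ^ r :=
  stmt5_general T hpos lam r hlam hr hr1
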